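/- Let (λ_k, x_k, v_k) be generated by the semi-implicit scheme: θ_k(λ_{k+1} − λ_k)/α_k = A v_{k+1} − b; (x_{k+1} − x_k)/α_k = v_{k+1} − x_{k+1}; γ_k(v_{k+1} − v_k)/α_k = μ_β(x_{k+1} − v_{k+1}) − (ξ_{k+1} + Aᵀλ̂_k) with ξ_{k+1} ∈ ∂f_β(x_{k+1}) + N_X(x_{k+1}) and λ̂_k = λ_k + (α_k/θ_k)(A v_k − b), with x₀ ∈ X, v₀ ∈ ℝⁿ, θ_{k+1} = θ_k/(1+α_k), γ_{k+1} = (γ_k + μ_β α_k)/(1+α_k), θ₀ = 1, γ₀ > 0, and γ_k θ_k = ‖A‖² α_k². Define E_k = L_β(x_k, λ*) − L_β(x*, λ_k) + (γ_k/2)‖v_k − x*‖² + (θ_k/2)‖λ_k − λ*‖² and R₀ = √(2E₀) + ‖λ₀ − λ*‖ + ‖Ax₀ − b‖. Then for all k: ‖Ax_k − b‖ ≤ θ_k R₀; 0 ≤ L(x_k, λ*) − L(x*, λ_k) ≤ θ_k E₀; and |f(x_k) − f(x*)| ≤ θ_k(E₀ + R₀‖λ*‖), where L(x,λ) = f(x)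 + δ_X(x) + ⟨λ, Ax − b⟩. -/

import Mathlib

open scoped RealInnerProductSpace Pointwise

/-- The smallest singular value of a linear map between Euclidean spaces. -/
noncomputable def sigmaMin {n m : ℕ}
    (A : EuclideanSpace ℝ (Fin n) →L[ℝ] EuclideanSpace ℝ (Fin m)) : ℝ :=
  sInf {c : ℝ | ∃ x : EuclideanSpace ℝ (Fin n), ‖x‖ = 1 ∧ ‖A x‖ = c}

/-- The convex subdifferential. -/
def subdiff {n : ℕ} (f : EuclideanSpace ℝ (Fin n) → ℝ)
    (x : EuclideanSpace ℝ (Fin n)) : Set (EuclideanSpace ℝ (Fin n)) :=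
  {p | ∀ y, f x + ⟪p, y - x⟫ ≤ f y}

/-- The normal cone of `X` at `x` (empty if `x ∉ X`). -/
def normalCone {n : ℕ} (X : Set (EuclideanSpace ℝ (Fin n)))
    (x : EuclideanSpace ℝ (Fin n)) : Set (EuclideanSpace ℝ (Fin n)) :=
  {p | x ∈ X ∧ ∀ z ∈ X, ⟪p, z - x⟫ ≤ 0}

/-!
A Lyapunov argument. Adding the penalty `β/2 ‖A x - b‖²` to `f` raises the strong convexity
modulus on `X` to `μ_β`, because its gradient enters subgradients additively and
`‖A w‖ ≥ σ_min(A) ‖w‖`. Testing the `v`-update against `v_{k+1} - x*` and using the `x`- and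
`λ`-updates, every inner product becomes a difference of the squared distances in `E`, up to
non-positive terms and the cross term `α_k ⟪A (v_{k+1} - v_k), λ_{k+1} - λ_k⟫`; the step-size rule
`γ_k θ_k = ‖A‖² α_k²` is exactly what lets Young's inequality absorb the latter. Hence
`(1 + α_k) E_{k+1} ≤ E_k`, so `E_k ≤ θ_k E_0`. The primal and dual updates also give
`(1 + α_k) (A x_{k+1} - b) - (A x_k - b) = θ_k (λ_{k+1} - λ_k)`, which telescopes to
`A x_k - b = θ_k (A x_0 - b - λ_0 + λ_k)`; as `E_k ≤ θ_k E_0` bounds `‖λ_k - λ*‖ ≤ √(2 E_0)`, this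
is the feasibility rate, and the objective rate follows from the Lagrangian gap bound and
Cauchy–Schwarz.
-/

open Set

section Subdifferential

variable {n m : ℕ} {X : Set (EuclideanSpace ℝ (Fin n))} {f : EuclideanSpace ℝ (Fin n) → ℝ}
  {A : EuclideanSpace ℝ (Fin n) →L[ℝ] EuclideanSpace ℝ (Fin m)} {b : EuclideanSpace ℝ (Fin m)}

variable (A) in
theorem sigmaMin_mul_norm_le (w : EuclideanSpace ℝ (Fin n)) :
    sigmaMin A * ‖w‖ ≤ ‖A w‖ := by
  rcases eq_or_ne w 0 with rfl | hw
  · simp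
  have hw' : 0 < ‖w‖ := norm_pos_iff.mpr hw
  have hunit : ‖‖w‖⁻¹ • w‖ = 1 := by
    rw [norm_smul, norm_inv, norm_norm, inv_mul_cancel₀ hw'.ne']
  have hle : sigmaMin A ≤ ‖A (‖w‖⁻¹ • w)‖ :=
    csInf_le ⟨0, by rintro _ ⟨_, _, rfl⟩; exact norm_nonneg _⟩ ⟨_, hunit, rfl⟩
  rwa [map_smul, norm_smul, norm_inv, norm_norm, inv_mul_eq_div, le_div_iff₀ hw'] at hle

variable (A) in
theorem sq_sigmaMin_mul_sq_norm_le (w : EuclideanSpace ℝ (Fin n)) :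
    sigmaMin A ^ 2 * ‖w‖ ^ 2 ≤ ‖A w‖ ^ 2 := by
  have hσ : 0 ≤ sigmaMin A := Real.sInf_nonneg <| by rintro _ ⟨_, _, rfl⟩; exact norm_nonneg _
  rw [← mul_pow]
  exact pow_le_pow_left₀ (by positivity) (sigmaMin_mul_norm_le A w) 2

theorem sub_mem_subdiff_of_mem_subdiff_add {g h : EuclideanSpace ℝ (Fin n) → ℝ}
    {x p q : EuclideanSpace ℝ (Fin n)} (hg : ConvexOn ℝ univ g) (hh : HasGradientAt h q x)
    (hp : p ∈ subdiff (fun z => g z + h z) x) : p - q ∈ subdiff g x := by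
  intro y
  set d := y - x
  have hslope : ∀ t ∈ Ioo (0 : ℝ) 1, ⟪p, d⟫ - (g y - g x) ≤ t⁻¹ • (h (x + t • d) - h x) := by
    rintro t ⟨ht0, ht1⟩
    have hconv : g (x + t • d) ≤ (1 - t) * g x + t * g y := by
      have := hg.2 (mem_univ x) (mem_univ y) (sub_nonneg.mpr ht1.le) ht0.le (by ring)
      rwa [show (1 - t) • x + t • y = x + t • d by simp only [d]; module] at this
    have hsub := hp (x + t • d)
    rw [add_sub_cancel_left, real_inner_smul_right] at hsub
    rw [smul_eq_mul, le_inv_mul_iff₀ ht0]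
    nlinarith
  have hlim := (hh.hasFDerivAt.hasLineDerivAt d).tendsto_slope_zero_right
  rw [InnerProductSpace.toDual_apply_apply] at hlim
  have hq : ⟪p, d⟫ - (g y - g x) ≤ ⟪q, d⟫ :=
    ge_of_tendsto hlim (Filter.mem_of_superset (Ioo_mem_nhdsGT one_pos) hslope)
  rw [inner_sub_left]
  linarith

variable (A b) in
theorem hasGradientAt_penalty (β : ℝ) (x : EuclideanSpace ℝ (Fin n)) :
    HasGradientAt (fun z => β / 2 * ‖A z - b‖ ^ 2)
      (β • ContinuousLinearMap.adjoint A (A x - b)) x := by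
  refine (((A.hasFDerivAt.sub_const b).norm_sq).const_mul (β / 2)).congr_fderiv ?_
  ext y
  simp [ContinuousLinearMap.adjoint_inner_left]
  ring

theorem strongConvexity_add_penalty {μ β : ℝ} (hβ : 0 ≤ β) (hf : ConvexOn ℝ univ f)
    (hsc : ∀ x ∈ X, ∀ y ∈ X, ∀ p ∈ subdiff f x,
      f x + ⟪p, y - x⟫ + μ / 2 * ‖y - x‖ ^ 2 ≤ f y)
    {x y p : EuclideanSpace ℝ (Fin n)} (hx : x ∈ X) (hy : y ∈ X)
    (hp : p ∈ subdiff (fun z => f z + β / 2 * ‖A z - b‖ ^ 2) x) :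
    f x + β / 2 * ‖A x - b‖ ^ 2 + ⟪p, y - x⟫ + (μ + β * sigmaMin A ^ 2) / 2 * ‖y - x‖ ^ 2
      ≤ f y + β / 2 * ‖A y - b‖ ^ 2 := by
  have hf_ineq := hsc x hx y hy _ (sub_mem_subdiff_of_mem_subdiff_add hf
    (hasGradientAt_penalty A b β x) hp)
  rw [inner_sub_left, real_inner_smul_left, ContinuousLinearMap.adjoint_inner_left] at hf_ineq
  have hexpand : ‖A y - b‖ ^ 2 = ‖A x - b‖ ^ 2 + 2 * ⟪A x - b, A (y - x)⟫ + ‖A (y - x)‖ ^ 2 := by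
    rw [← norm_add_sq_real, map_sub]
    congr 2
    abel
  nlinarith [mul_le_mul_of_nonneg_left (sq_sigmaMin_mul_sq_norm_le A (y - x)) hβ]

theorem strongConvexity_of_mem_subdiff_add_normalCone {φ : EuclideanSpace ℝ (Fin n) → ℝ} {μ : ℝ}
    (hφ : ∀ x ∈ X, ∀ y ∈ X, ∀ p ∈ subdiff φ x, φ x + ⟪p, y - x⟫ + μ / 2 * ‖y - x‖ ^ 2 ≤ φ y)
    {x ξ : EuclideanSpace ℝ (Fin n)} (hξ : ξ ∈ subdiff φ x + normalCone X x) :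
    x ∈ X ∧ ∀ y ∈ X, φ x + ⟪ξ, y - x⟫ + μ / 2 * ‖y - x‖ ^ 2 ≤ φ y := by
  obtain ⟨p, hp, q, ⟨hx, hq⟩, rfl⟩ := hξ
  refine ⟨hx, fun y hy => ?_⟩
  rw [inner_add_left]
  linarith [hφ x hx y hy p hp, hq y hy]

theorem lagrangian_gap_nonneg {xs : EuclideanSpace ℝ (Fin n)} {ls : EuclideanSpace ℝ (Fin m)}
    (hAxs : A xs = b)
    (hKKT : ∃ p ∈ subdiff f xs, ∃ q ∈ normalCone X xs, p + q + ContinuousLinearMap.adjoint A ls = 0)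
    {z : EuclideanSpace ℝ (Fin n)} (hz : z ∈ X) :
    0 ≤ f z - f xs + ⟪ls, A z - b⟫ := by
  obtain ⟨p, hp, q, ⟨-, hq⟩, hpq⟩ := hKKT
  have hinner : ⟪p, z - xs⟫ + ⟪q, z - xs⟫ + ⟪ls, A z - b⟫ = 0 := by
    rw [← hAxs, ← map_sub, ← ContinuousLinearMap.adjoint_inner_left, ← inner_add_left,
      ← inner_add_left, hpq, inner_zero_left]
  linarith [hp z, hq z hz]

end Subdifferential

section OneStep

variable {E F : Type*} [NormedAddCommGroup E] [InnerProductSpace ℝ E]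
  [NormedAddCommGroup F] [InnerProductSpace ℝ F]
  {A : E →L[ℝ] F} {b : F} {a t g : ℝ}

theorem mul_inner_apply_le_of_mul_eq (ha : 0 ≤ a) (ht : 0 < t) (hstep : g * t = ‖A‖ ^ 2 * a ^ 2)
    (u : E) (w : F) : a * ⟪A u, w⟫ ≤ g / 2 * ‖u‖ ^ 2 + t / 2 * ‖w‖ ^ 2 := by
  have hCS : a * ⟪A u, w⟫ ≤ a * (‖A‖ * ‖u‖ * ‖w‖) := mul_le_mul_of_nonneg_left
    ((real_inner_le_norm _ _).trans (mul_le_mul_of_nonneg_right (A.le_opNorm u) (norm_nonneg w))) ha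
  -- `2t (g/2 ‖u‖² + t/2 ‖w‖² - a ‖A‖ ‖u‖ ‖w‖) = (a ‖A‖ ‖u‖ - t ‖w‖)²` by the step-size rule
  have hsq : 0 ≤ t * (g / 2 * ‖u‖ ^ 2 + t / 2 * ‖w‖ ^ 2 - a * ‖A‖ * ‖u‖ * ‖w‖) := by
    nlinarith [sq_nonneg (a * ‖A‖ * ‖u‖ - t * ‖w‖)]
  nlinarith [(mul_nonneg_iff_of_pos_left ht).mp hsq]

variable {x₀ x₁ v₀ v₁ xs : E} {l₀ l₁ lhat ls : F}

theorem residual_step (ha : a ≠ 0) (hprim : a⁻¹ • (x₁ - x₀) = v₁ - x₁)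
    (hdual : (t / a) • (l₁ - l₀) = A v₁ - b) :
    (1 + a) • (A x₁ - b) - (A x₀ - b) = t • (l₁ - l₀) := by
  have hx : x₁ - x₀ = a • (v₁ - x₁) := by rw [← hprim, smul_inv_smul₀ ha]
  calc (1 + a) • (A x₁ - b) - (A x₀ - b) = A (x₁ - x₀) + a • (A x₁ - b) := by
        rw [map_sub]; module
    _ = a • ((t / a) • (l₁ - l₀)) := by rw [hdual, hx, map_smul, map_sub]; module
    _ = t • (l₁ - l₀) := by rw [smul_smul, mul_div_cancel₀ t ha]

theorem lagrangian_step_le {φ : E → ℝ} {μβ : ℝ} {ξ : E} (hμβ : 0 ≤ μβ) (ha : 0 ≤ a)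
    (hx : x₁ - x₀ = a • (v₁ - x₁))
    (hres : (1 + a) • (A x₁ - b) - (A x₀ - b) = t • (l₁ - l₀))
    (hξ₀ : φ x₁ + ⟪ξ, x₀ - x₁⟫ + μβ / 2 * ‖x₀ - x₁‖ ^ 2 ≤ φ x₀)
    (hξs : φ x₁ + ⟪ξ, xs - x₁⟫ + μβ / 2 * ‖xs - x₁‖ ^ 2 ≤ φ xs) :
    (1 + a) * (φ x₁ + ⟪ls, A x₁ - b⟫ - φ xs) - (φ x₀ + ⟪ls, A x₀ - b⟫ - φ xs)
      ≤ a * ⟪ξ, v₁ - xs⟫ - a * μβ / 2 * ‖x₁ - xs‖ ^ 2 + t * ⟪ls, l₁ - l₀⟫ := by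
  have hξ : ⟪ξ, x₀ - x₁⟫ + a * ⟪ξ, xs - x₁⟫ = -(a * ⟪ξ, v₁ - xs⟫) := by
    rw [← real_inner_smul_right, ← inner_add_right, ← real_inner_smul_right, ← inner_neg_right]
    congr 1
    rw [← neg_sub x₁ x₀, hx]
    module
  have hls : (1 + a) * ⟪ls, A x₁ - b⟫ - ⟪ls, A x₀ - b⟫ = t * ⟪ls, l₁ - l₀⟫ := by
    rw [← real_inner_smul_right, ← inner_sub_right, hres, real_inner_smul_right]
  have hμ₀ : 0 ≤ μβ / 2 * ‖x₀ - x₁‖ ^ 2 := by positivity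
  rw [norm_sub_rev] at hξs
  nlinarith [mul_le_mul_of_nonneg_left hξs ha]

theorem inner_step_eq [CompleteSpace E] [CompleteSpace F] {μβ : ℝ} {ξ : E} (ha : a ≠ 0)
    (ht : t ≠ 0) (hAxs : A xs = b) (hdual : (t / a) • (l₁ - l₀) = A v₁ - b)
    (hlhat : lhat = l₀ + (a / t) • (A v₀ - b))
    (hv : (g / a) • (v₁ - v₀) = μβ • (x₁ - v₁) - (ξ + ContinuousLinearMap.adjoint A lhat)) :
    a * ⟪ξ, v₁ - xs⟫ + t * ⟪ls, l₁ - l₀⟫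
      = a * μβ * ⟪x₁ - v₁, v₁ - xs⟫ - g * ⟪v₁ - v₀, v₁ - xs⟫ - t * ⟪l₀ - ls, l₁ - l₀⟫
        - t * ‖l₁ - l₀‖ ^ 2 + a * ⟪A (v₁ - v₀), l₁ - l₀⟫ := by
  have hξ : a • ξ
      = (a * μβ) • (x₁ - v₁) - g • (v₁ - v₀) - a • ContinuousLinearMap.adjoint A lhat := by
    have h := congrArg (a • ·) hv
    simp only [smul_smul, mul_div_cancel₀ g ha] at h
    rw [h]
    module
  have hAv : A (v₁ - xs) = (t / a) • (l₁ - l₀) := by rw [hdual, map_sub, hAxs]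
  have hAv₀ : A v₀ - b = (t / a) • (l₁ - l₀) - A (v₁ - v₀) := by rw [hdual, map_sub]; abel
  have hlhat_inner : a * ⟪lhat, A (v₁ - xs)⟫
      = t * ⟪l₀, l₁ - l₀⟫ + t * ‖l₁ - l₀‖ ^ 2 - a * ⟪A (v₁ - v₀), l₁ - l₀⟫ := by
    rw [hAv, hlhat, hAv₀, real_inner_smul_right, inner_add_left, real_inner_smul_left,
      inner_sub_left, real_inner_smul_left, real_inner_self_eq_norm_sq]
    field_simp
    ring
  calc a * ⟪ξ, v₁ - xs⟫ + t * ⟪ls, l₁ - l₀⟫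
      = a * μβ * ⟪x₁ - v₁, v₁ - xs⟫ - g * ⟪v₁ - v₀, v₁ - xs⟫ - a * ⟪lhat, A (v₁ - xs)⟫
        + t * ⟪ls, l₁ - l₀⟫ := by
        rw [← real_inner_smul_left, hξ, inner_sub_left, inner_sub_left, real_inner_smul_left,
          real_inner_smul_left, real_inner_smul_left, ContinuousLinearMap.adjoint_inner_left]
    _ = _ := by rw [hlhat_inner, inner_sub_left l₀]; ring

theorem lyapunov_step [CompleteSpace E] [CompleteSpace F] {φ : E → ℝ} {μβ t' g' : ℝ} {ξ : E}
    (hμβ : 0 ≤ μβ) (ha : 0 < a) (ht : 0 < t) (hstep : g * t = ‖A‖ ^ 2 * a ^ 2)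
    (ht' : t' = t / (1 + a)) (hg' : g' = (g + μβ * a) / (1 + a)) (hAxs : A xs = b)
    (hprim : a⁻¹ • (x₁ - x₀) = v₁ - x₁) (hdual : (t / a) • (l₁ - l₀) = A v₁ - b)
    (hlhat : lhat = l₀ + (a / t) • (A v₀ - b))
    (hv : (g / a) • (v₁ - v₀) = μβ • (x₁ - v₁) - (ξ + ContinuousLinearMap.adjoint A lhat))
    (hξ₀ : φ x₁ + ⟪ξ, x₀ - x₁⟫ + μβ / 2 * ‖x₀ - x₁‖ ^ 2 ≤ φ x₀)
    (hξs : φ x₁ + ⟪ξ, xs - x₁⟫ + μβ / 2 * ‖xs - x₁‖ ^ 2 ≤ φ xs) :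
    (1 + a) * (φ x₁ + ⟪ls, A x₁ - b⟫ - φ xs + g' / 2 * ‖v₁ - xs‖ ^ 2 + t' / 2 * ‖l₁ - ls‖ ^ 2)
      ≤ φ x₀ + ⟪ls, A x₀ - b⟫ - φ xs + g / 2 * ‖v₀ - xs‖ ^ 2 + t / 2 * ‖l₀ - ls‖ ^ 2 := by
  have hx : x₁ - x₀ = a • (v₁ - x₁) := by rw [← hprim, smul_inv_smul₀ ha.ne']
  have hgap := lagrangian_step_le (ls := ls) hμβ ha.le hx
    (residual_step ha.ne' hprim hdual) hξ₀ hξs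
  have hinner := inner_step_eq (ls := ls) ha.ne' ht.ne' hAxs hdual hlhat hv
  have hcross := mul_inner_apply_le_of_mul_eq ha.le ht hstep (v₁ - v₀) (l₁ - l₀)
  have hpol_v := norm_sub_sq_real (v₁ - xs) (v₁ - v₀)
  have hpol_l := norm_add_sq_real (l₀ - ls) (l₁ - l₀)
  have hpol_x := norm_add_sq_real (x₁ - v₁) (v₁ - xs)
  rw [sub_sub_sub_cancel_left] at hpol_v
  rw [sub_add_sub_cancel'] at hpol_l
  rw [sub_add_sub_cancel] at hpol_x
  have hg'a : (1 + a) * g' = g + μβ * a := by rw [hg']; field_simp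
  have ht'a : (1 + a) * t' = t := by rw [ht']; field_simp
  have hμx : 0 ≤ a * μβ * ‖x₁ - v₁‖ ^ 2 := by positivity
  rw [real_inner_comm (v₁ - v₀)] at hpol_v
  linear_combination hgap + hinner + hcross + hμx / 2 - (a * μβ / 2) * hpol_x
    - (g / 2) * hpol_v + (t / 2) * hpol_l + (‖v₁ - xs‖ ^ 2 / 2) * hg'a
    + (‖l₁ - ls‖ ^ 2 / 2) * ht'a

section Recurrences

variable {α θ : ℕ → ℝ}

theorem pos_of_succ_eq_div (hα : ∀ k, 0 < α k) (hθ0 : θ 0 = 1)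
    (hθ : ∀ k, θ (k + 1) = θ k / (1 + α k)) (k : ℕ) : 0 < θ k := by
  induction k with
  | zero => simp [hθ0]
  | succ k ih => rw [hθ k]; have := hα k; positivity

theorem le_mul_of_one_add_mul_succ_le {E : ℕ → ℝ} (hα : ∀ k, 0 < α k) (hθ0 : θ 0 = 1)
    (hθ : ∀ k, θ (k + 1) = θ k / (1 + α k)) (hE : ∀ k, (1 + α k) * E (k + 1) ≤ E k) (k : ℕ) :
    E k ≤ θ k * E 0 := by
  induction k with
  | zero => simp [hθ0]
  | succ k ih =>
    have h1 : 0 < 1 + α k := by linarith [hα k]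
    rw [hθ k, div_mul_eq_mul_div, le_div_iff₀ h1, mul_comm]
    exact (hE k).trans ih

theorem eq_smul_of_one_add_smul_succ_sub {V : Type*} [AddCommGroup V] [Module ℝ V] {r l : ℕ → V}
    (hα : ∀ k, 0 < α k) (hθ0 : θ 0 = 1) (hθ : ∀ k, θ (k + 1) = θ k / (1 + α k))
    (hr : ∀ k, (1 + α k) • r (k + 1) - r k = θ k • (l (k + 1) - l k)) (k : ℕ) :
    r k = θ k • (r 0 - l 0 + l k) := by
  induction k with
  | zero => rw [hθ0, one_smul]; abel
  | succ k ih =>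
    have h1 : 1 + α k ≠ 0 := by linarith [hα k]
    apply smul_right_injective V h1
    calc (1 + α k) • r (k + 1) = r k + θ k • (l (k + 1) - l k) := by rw [← hr k]; abel
      _ = (1 + α k) • θ (k + 1) • (r 0 - l 0 + l (k + 1)) := by
        rw [ih, smul_smul, hθ k, mul_div_cancel₀ _ h1]; module

end Recurrences

theorem norm_le_and_abs_le_of_energy_le {F : Type*} [NormedAddCommGroup F]
    [InnerProductSpace ℝ F] {d θ E₀ R : ℝ} {r r₀ l l₀ ls : F} (hθ : 0 < θ)
    (hgap : 0 ≤ d + ⟪ls, r⟫) (hE : d + ⟪ls, r⟫ + θ / 2 * ‖l - ls‖ ^ 2 ≤ θ * E₀)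
    (hr : r = θ • (r₀ - l₀ + l)) (hR : R = √(2 * E₀) + ‖l₀ - ls‖ + ‖r₀‖) :
    ‖r‖ ≤ θ * R ∧ |d| ≤ θ * (E₀ + R * ‖ls‖) := by
  have hl : ‖l - ls‖ ≤ √(2 * E₀) := by
    refine Real.le_sqrt_of_sq_le (le_of_mul_le_mul_left ?_ hθ)
    linarith
  have hr_le : ‖r‖ ≤ θ * R := by
    rw [hr, norm_smul, Real.norm_of_nonneg hθ.le, hR]
    gcongr
    calc ‖r₀ - l₀ + l‖ = ‖(l - ls) + (ls - l₀) + r₀‖ := by congr 1; abel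
      _ ≤ ‖l - ls‖ + ‖l₀ - ls‖ + ‖r₀‖ := by rw [norm_sub_rev l₀]; exact norm_add₃_le
      _ ≤ √(2 * E₀) + ‖l₀ - ls‖ + ‖r₀‖ := by gcongr
  have hcs : |⟪ls, r⟫| ≤ θ * R * ‖ls‖ := by
    rw [mul_comm _ ‖ls‖]
    exact (abs_real_inner_le_norm ls r).trans (by gcongr)
  refine ⟨hr_le, abs_le.mpr ⟨?_, ?_⟩⟩ <;>
    nlinarith [abs_le.mp hcs, mul_nonneg hθ.le (sq_nonneg ‖l - ls‖)]

theorem semi_implicit_scheme_rates_general {n m : ℕ}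
    (X : Set (EuclideanSpace ℝ (Fin n)))
    (f : EuclideanSpace ℝ (Fin n) → ℝ)
    (hfcv : ConvexOn ℝ Set.univ f)
    (A : EuclideanSpace ℝ (Fin n) →L[ℝ] EuclideanSpace ℝ (Fin m))
    (b : EuclideanSpace ℝ (Fin m))
    (μ β μβ : ℝ) (hμ : 0 ≤ μ) (hβ : 0 ≤ β)
    (hμβ : μβ = μ + β * sigmaMin A ^ 2)
    (hsc : ∀ x ∈ X, ∀ y ∈ X, ∀ p ∈ subdiff f x,
      f x + ⟪p, y - x⟫ + μ / 2 * ‖y - x‖ ^ 2 ≤ f y)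
    (fβ : EuclideanSpace ℝ (Fin n) → ℝ)
    (hfβ : ∀ z, fβ z = f z + β / 2 * ‖A z - b‖ ^ 2)
    (Lβ : EuclideanSpace ℝ (Fin n) → EuclideanSpace ℝ (Fin m) → ℝ)
    (hLβ : ∀ z w, Lβ z w = fβ z + ⟪w, A z - b⟫)
    (xs : EuclideanSpace ℝ (Fin n)) (ls : EuclideanSpace ℝ (Fin m))
    (hxs : xs ∈ X) (hKKT1 : A xs = b)
    (hKKT2 : ∃ p ∈ subdiff f xs, ∃ q ∈ normalCone X xs,
      p + q + (ContinuousLinearMap.adjoint A) ls = 0)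
    (θ γ α : ℕ → ℝ)
    (hα : ∀ k, 0 < α k) (hθ0 : θ 0 = 1) (hγ0 : 0 < γ 0)
    (hθ : ∀ k, θ (k + 1) = θ k / (1 + α k))
    (hγ : ∀ k, γ (k + 1) = (γ k + μβ * α k) / (1 + α k))
    (lam : ℕ → EuclideanSpace ℝ (Fin m))
    (x v : ℕ → EuclideanSpace ℝ (Fin n))
    (hx0 : x 0 ∈ X)
    (hdual : ∀ k, (θ k / α k) • (lam (k + 1) - lam k) = A (v (k + 1)) - b)
    (hprim : ∀ k, (α k)⁻¹ • (x (k + 1) - x k) = v (k + 1) - x (k + 1))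
    (lamhat : ℕ → EuclideanSpace ℝ (Fin m))
    (hlamhat : ∀ k, lamhat k = lam k + (α k / θ k) • (A (v k) - b))
    (hvup : ∀ k, ∃ ξ ∈ subdiff fβ (x (k + 1)) + normalCone X (x (k + 1)),
      (γ k / α k) • (v (k + 1) - v k) =
        μβ • (x (k + 1) - v (k + 1)) -
          (ξ + (ContinuousLinearMap.adjoint A) (lamhat k)))
    (hstep : ∀ k, γ k * θ k = ‖A‖ ^ 2 * α k ^ 2)
    (Ef : ℕ → ℝ)
    (hEf : ∀ k, Ef k = Lβ (x k) ls - Lβ xs (lam k)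
      + γ k / 2 * ‖v k - xs‖ ^ 2 + θ k / 2 * ‖lam k - ls‖ ^ 2)
    (Lag : EuclideanSpace ℝ (Fin n) → EuclideanSpace ℝ (Fin m) → ℝ)
    (hLag : ∀ z w, Lag z w = f z + ⟪w, A z - b⟫)
    (R₀ : ℝ)
    (hR₀ : R₀ = Real.sqrt (2 * Ef 0) + ‖lam 0 - ls‖ + ‖A (x 0) - b‖) :
    ∀ k, ‖A (x k) - b‖ ≤ θ k * R₀ ∧
      (0 ≤ Lag (x k) ls - Lag xs (lam k) ∧
        Lag (x k) ls - Lag xs (lam k) ≤ θ k * Ef 0) ∧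
      |f (x k) - f xs| ≤ θ k * (Ef 0 + R₀ * ‖ls‖) := by
  have hμβ0 : 0 ≤ μβ := hμβ ▸ by positivity
  have hθpos := pos_of_succ_eq_div hα hθ0 hθ
  have hγpos : ∀ k, 0 < γ k := fun k => by
    induction k with
    | zero => exact hγ0
    | succ k ih => rw [hγ k]; have := hα k; positivity
  have hφ : ∀ z ∈ X, ∀ y ∈ X, ∀ p ∈ subdiff fβ z,
      fβ z + ⟪p, y - z⟫ + μβ / 2 * ‖y - z‖ ^ 2 ≤ fβ y := by
    obtain rfl : fβ = fun z => f z + β / 2 * ‖A z - b‖ ^ 2 := funext hfβ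
    exact fun z hz y hy p hp => hμβ ▸ strongConvexity_add_penalty hβ hfcv hsc hz hy hp
  have hxX : ∀ k, x k ∈ X
    | 0 => hx0
    | k + 1 => (strongConvexity_of_mem_subdiff_add_normalCone hφ (hvup k).choose_spec.1).1
  have hLβxs : ∀ w, Lβ xs w = fβ xs := by simp [hLβ, hKKT1]
  have hdec : ∀ k, (1 + α k) * Ef (k + 1) ≤ Ef k := by
    intro k
    obtain ⟨ξ, hξ, hv⟩ := hvup k
    have hξ' := (strongConvexity_of_mem_subdiff_add_normalCone hφ hξ).2
    rw [hEf, hEf, hLβxs, hLβxs, hLβ, hLβ]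
    exact lyapunov_step hμβ0 (hα k) (hθpos k) (hstep k) (hθ k) (hγ k) hKKT1 (hprim k) (hdual k)
      (hlamhat k) hv (hξ' _ (hxX k)) (hξ' _ hxs)
  have hres := eq_smul_of_one_add_smul_succ_sub (r := fun k => A (x k) - b) hα hθ0 hθ
    fun k => residual_step (hα k).ne' (hprim k) (hdual k)
  intro k
  have hgap := lagrangian_gap_nonneg hKKT1 hKKT2 (hxX k)
  have hLag_k : Lag (x k) ls - Lag xs (lam k) = f (x k) - f xs + ⟪ls, A (x k) - b⟫ := by
    simp only [hLag, hKKT1, sub_self, inner_zero_right]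
    ring
  have hEk : f (x k) - f xs + ⟪ls, A (x k) - b⟫ + θ k / 2 * ‖lam k - ls‖ ^ 2 ≤ θ k * Ef 0 := by
    have hE := le_mul_of_one_add_mul_succ_le hα hθ0 hθ hdec k
    rw [hEf, hLβxs, hLβ, hfβ, hfβ xs, hKKT1, sub_self, norm_zero] at hE
    have hpen : 0 ≤ β / 2 * ‖A (x k) - b‖ ^ 2 := by positivity
    have hvk : 0 ≤ γ k / 2 * ‖v k - xs‖ ^ 2 := by have := hγpos k; positivity
    linarith
  obtain ⟨hfeas, hf⟩ := norm_le_and_abs_le_of_energy_le (hθpos k) hgap hEk (hres k) hR₀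
  have hθl : 0 ≤ θ k / 2 * ‖lam k - ls‖ ^ 2 := by have := hθpos k; positivity
  exact ⟨hfeas, ⟨hLag_k ▸ hgap, hLag_k ▸ by linarith⟩, hf⟩

/-- Theorem 4.1 (rate part): nonergodic convergence rates for the semi-implicit scheme (4.2)
with step size `γ_k θ_k = ‖A‖² α_k²`. -/
theorem semi_implicit_scheme_rates {n m : ℕ}
    (X : Set (EuclideanSpace ℝ (Fin n)))
    (hXne : X.Nonempty) (hXcl : IsClosed X) (hXcv : Convex ℝ X)
    (f : EuclideanSpace ℝ (Fin n) → ℝ)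
    (hfcv : ConvexOn ℝ Set.univ f)
    (A : EuclideanSpace ℝ (Fin n) →L[ℝ] EuclideanSpace ℝ (Fin m))
    (b : EuclideanSpace ℝ (Fin m)) (hA : 0 < ‖A‖)
    (μ β μβ : ℝ) (hμ : 0 ≤ μ) (hβ : 0 ≤ β)
    (hμβ : μβ = μ + β * sigmaMin A ^ 2)
    (hsc : ∀ x ∈ X, ∀ y ∈ X, ∀ p ∈ subdiff f x,
      f x + ⟪p, y - x⟫ + μ / 2 * ‖y - x‖ ^ 2 ≤ f y)
    (fβ : EuclideanSpace ℝ (Fin n) → ℝ)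
    (hfβ : ∀ z, fβ z = f z + β / 2 * ‖A z - b‖ ^ 2)
    (Lβ : EuclideanSpace ℝ (Fin n) → EuclideanSpace ℝ (Fin m) → ℝ)
    (hLβ : ∀ z w, Lβ z w = fβ z + ⟪w, A z - b⟫)
    (xs : EuclideanSpace ℝ (Fin n)) (ls : EuclideanSpace ℝ (Fin m))
    (hxs : xs ∈ X) (hKKT1 : A xs = b)
    (hKKT2 : ∃ p ∈ subdiff f xs, ∃ q ∈ normalCone X xs,
      p + q + (ContinuousLinearMap.adjoint A) ls = 0)
    (θ γ α : ℕ → ℝ)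
    (hα : ∀ k, 0 < α k) (hθ0 : θ 0 = 1) (hγ0 : 0 < γ 0)
    (hθ : ∀ k, θ (k + 1) = θ k / (1 + α k))
    (hγ : ∀ k, γ (k + 1) = (γ k + μβ * α k) / (1 + α k))
    (lam : ℕ → EuclideanSpace ℝ (Fin m))
    (x v : ℕ → EuclideanSpace ℝ (Fin n))
    (hx0 : x 0 ∈ X)
    (hdual : ∀ k, (θ k / α k) • (lam (k + 1) - lam k) = A (v (k + 1)) - b)
    (hprim : ∀ k, (α k)⁻¹ • (x (k + 1) - x k) = v (k + 1) - x (k + 1))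
    (lamhat : ℕ → EuclideanSpace ℝ (Fin m))
    (hlamhat : ∀ k, lamhat k = lam k + (α k / θ k) • (A (v k) - b))
    (hvup : ∀ k, ∃ ξ ∈ subdiff fβ (x (k + 1)) + normalCone X (x (k + 1)),
      (γ k / α k) • (v (k + 1) - v k) =
        μβ • (x (k + 1) - v (k + 1)) -
          (ξ + (ContinuousLinearMap.adjoint A) (lamhat k)))
    (hstep : ∀ k, γ k * θ k = ‖A‖ ^ 2 * α k ^ 2)
    (Ef : ℕ → ℝ)
    (hEf : ∀ k, Ef k = Lβ (x k) ls - Lβ xs (lam k)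
      + γ k / 2 * ‖v k - xs‖ ^ 2 + θ k / 2 * ‖lam k - ls‖ ^ 2)
    (Lag : EuclideanSpace ℝ (Fin n) → EuclideanSpace ℝ (Fin m) → ℝ)
    (hLag : ∀ z w, Lag z w = f z + ⟪w, A z - b⟫)
    (R₀ : ℝ)
    (hR₀ : R₀ = Real.sqrt (2 * Ef 0) + ‖lam 0 - ls‖ + ‖A (x 0) - b‖) :
    ∀ k, ‖A (x k) - b‖ ≤ θ k * R₀ ∧
      (0 ≤ Lag (x k) ls - Lag xs (lam k) ∧
        Lag (x k) ls - Lag xs (lam k) ≤ θ k * Ef 0) ∧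
      |f (x k) - f xs| ≤ θ k * (Ef 0 + R₀ * ‖ls‖) :=
  semi_implicit_scheme_rates_general X f hfcv A b μ β μβ hμ hβ hμβ hsc fβ hfβ Lβ hLβ xs ls hxs hKKT1
    hKKT2 θ γ α hα hθ0 hγ0 hθ hγ lam x v hx0 hdual hprim lamhat hlamhat hvup hstep Ef hEf Lag hLag
    R₀ hR₀
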